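/- arXiv:2409.10396 — 3 statements merged into one kernel-verified Lean document; each statement's English description precedes it below -/
import Mathlib

section
/- Let g be a Lie algebra over a field of characteristic zero containing elements e_i, f_i, h_i and e_j, f_j, h_j (i ≠ j) with [h_i, e_i] = 2e_i, [h_i, f_i] = −2f_i, [e_i, f_i] = h_i, [e_i, f_j] = 0, and [h_i, f_j] = −A_{ij} f_j for an integer A_{ij}. Then ad e_i ((ad f_i)^{1−A_{ij}} (f_j)) = 0. -/
/-- `ad e_i ((ad f_i)^{1-A_{ij}} f_j) = 0` under the Serre-type relations. -/
theorem stmt_3 {k g : Type*} [Field k] [CharZero k] [LieRing g] [LieAlgebra k g]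
    (e f h fj : g) (A : ℤ) (hA : A ≤ 0)
    (h1 : ⁅h, e⁆ = (2 : k) • e) (h2 : ⁅h, f⁆ = -((2 : k) • f)) (h3 : ⁅e, f⁆ = h)
    (h4 : ⁅e, fj⁆ = 0) (h5 : ⁅h, fj⁆ = -((A : k) • fj)) :
    LieAlgebra.ad k g e (((LieAlgebra.ad k g f) ^ ((1 - A).toNat)) fj) = 0 := by
  have key : ∀ n : ℕ,
      ⁅h, ((LieAlgebra.ad k g f) ^ n) fj⁆
        = (((-A - 2*n : ℤ)) : k) • ((LieAlgebra.ad k g f) ^ n) fj ∧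
      ⁅e, ((LieAlgebra.ad k g f) ^ (n+1)) fj⁆
        = ((((n:ℤ)+1) * (-A - n) : ℤ) : k) • ((LieAlgebra.ad k g f) ^ n) fj := by
    intro n
    induction n with
    | zero =>
      constructor
      · simp only [pow_zero, Module.End.one_apply, Nat.cast_zero]
        rw [h5]; push_cast; module
      · simp only [zero_add, pow_zero, pow_one, Module.End.one_apply, LieAlgebra.ad_apply, Nat.cast_zero]
        rw [leibniz_lie, h3, h4, lie_zero, add_zero, h5]; push_cast; module
    | succ n ih =>
      obtain ⟨ihh, ihe⟩ := ih
      have hp : ∀ m : ℕ, ((LieAlgebra.ad k g f) ^ (m+1)) fj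
          = ⁅f, ((LieAlgebra.ad k g f) ^ m) fj⁆ := by
        intro m
        rw [pow_succ', Module.End.mul_apply, LieAlgebra.ad_apply]
      have hh : ⁅h, ((LieAlgebra.ad k g f) ^ (n+1)) fj⁆
          = (((-A - 2*(((n+1:ℕ)):ℤ) : ℤ)) : k) • ((LieAlgebra.ad k g f) ^ (n+1)) fj := by
        rw [hp n, leibniz_lie, h2, ihh, lie_smul, neg_lie, smul_lie, ← hp n]
        push_cast; module
      refine ⟨hh, ?_⟩
      · rw [hp (n+1), leibniz_lie, h3, hh, ihe, lie_smul, ← hp n]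
        push_cast; module
  have hn : (1 - A).toNat = (-A).toNat + 1 := by omega
  have hm : ((-A).toNat : ℤ) = -A := by omega
  rw [hn, LieAlgebra.ad_apply, (key (-A).toNat).2, hm]
  norm_num
end

section
/- Let A be an n×n matrix over a field with rank r, arranged so that its upper-left r×r submatrix A(r) is invertible. Define the (2n−r)×(2n−r) block matrix E = [[A(r), B, 0], [C, D, I_{n−r}], [0, I_{n−r}, 0]], where A = [[A(r), B],[C, D]]. Then det E = ± det A(r), and in particular E is invertible. -/
/-!
Taking the Schur complement of the invertible block `A(r)` gives
`det E = det A(r) * det [[D - C A(r)⁻¹ B, I], [I, 0]]`. Right-multiplying by the involution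
`J = [[0, I], [I, 0]]` turns `[[X, I], [I, 0]]` into the unitriangular `[[I, X], [0, I]]`, so the
second factor is `det J`, and `det J = ±1` because `J * J = 1`.
-/

namespace Matrix

variable {m n R : Type*} [Fintype m] [DecidableEq m] [Fintype n] [DecidableEq n]

variable (n R) in
def blockSwap [Zero R] [One R] : Matrix (n ⊕ n) (n ⊕ n) R :=
  fromBlocks 0 1 1 0

section CommRing

variable [CommRing R]

theorem det_fromBlocks_one_one_zero (X : Matrix n n R) :
    (fromBlocks X 1 1 (0 : Matrix n n R)).det = (blockSwap n R).det := by
  have hfactor : fromBlocks X 1 1 0 = fromBlocks 1 X 0 1 * blockSwap n R := by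
    simp [blockSwap, fromBlocks_multiply]
  rw [hfactor, det_mul, det_fromBlocks_zero₂₁]
  simp

theorem det_fromBlocks_fromCols_zero_fromRows_zero (A : Matrix m m R) [Invertible A]
    (B : Matrix m n R) (C : Matrix n m R) (D : Matrix n n R) :
    (fromBlocks A (fromCols B 0) (fromRows C 0) (fromBlocks D 1 1 (0 : Matrix n n R))).det =
      A.det * (blockSwap n R).det := by
  have hschur : fromBlocks D 1 1 (0 : Matrix n n R) - fromRows C 0 * ⅟A * fromCols B 0 =
      fromBlocks (D - C * ⅟A * B) 1 1 0 := by
    rw [fromRows_mul, fromRows_mul_fromCols]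
    ext (i | i) (j | j) <;> simp [sub_apply]
  rw [det_fromBlocks₁₁, hschur, det_fromBlocks_one_one_zero]

end CommRing

theorem det_blockSwap_eq_one_or_neg_one [CommRing R] [NoZeroDivisors R] :
    (blockSwap n R).det = 1 ∨ (blockSwap n R).det = -1 := by
  refine mul_self_eq_one_iff.mp ?_
  rw [← det_mul, blockSwap, fromBlocks_multiply]
  simp [fromBlocks_one]

end Matrix

/-- the extended matrix `E = [[A(r), B, 0], [C, D, I], [0, I, 0]]` has
determinant `± det A(r)` and is invertible when `A(r)` is. -/
theorem stmt_6 {k : Type*} [Field k] {r s : ℕ}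
    (Ar : Matrix (Fin r) (Fin r) k) (B : Matrix (Fin r) (Fin s) k)
    (C : Matrix (Fin s) (Fin r) k) (D : Matrix (Fin s) (Fin s) k)
    (hAr : IsUnit Ar.det)
    (E : Matrix (Fin r ⊕ (Fin s ⊕ Fin s)) (Fin r ⊕ (Fin s ⊕ Fin s)) k)
    (hE : E = Matrix.fromBlocks Ar
        (Matrix.fromCols B (0 : Matrix (Fin r) (Fin s) k))
        (Matrix.fromRows C (0 : Matrix (Fin s) (Fin r) k))
        (Matrix.fromBlocks D 1 1 0)) :
    (E.det = Ar.det ∨ E.det = -Ar.det) ∧ IsUnit E.det := by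
  have := Ar.invertibleOfIsUnitDet hAr
  rw [hE, Matrix.det_fromBlocks_fromCols_zero_fromRows_zero]
  rcases Matrix.det_blockSwap_eq_one_or_neg_one (n := Fin s) (R := k) with hJ | hJ <;> rw [hJ]
  · exact ⟨Or.inl (mul_one _), by simpa using hAr⟩
  · exact ⟨Or.inr (mul_neg_one _), by simpa using hAr⟩
end

section
/- For every n×n complex matrix A of rank r, there exists a realization: a complex vector space H of dimension 2n−r, linearly independent elements α_1^∨, …, α_n^∨ ∈ H, and linearly independent linear functionals α_1, …, α_n ∈ H* such that α_i(α_j^∨) = A_{ji} for all i, j. -/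
/-!
Realize `H = ℂⁿ × W`, where `W` is a complement of the column space of `Aᵀ`, so that
`dim H = n + (n - r)`. The coroots are `(e_j, 0)` and the roots are the coordinates of the
surjection `T (x, w) = Aᵀ x + w : H → ℂⁿ`; then `α_i (α_j^∨) = (Aᵀ e_j)_i = A_{ji}`, and the roots
are independent because `T` is onto.
-/

open Module LinearMap Matrix

theorem LinearMap.linearIndependent_proj_comp_of_surjective {R M ι : Type*} [CommRing R]
    [AddCommGroup M] [Module R M] [DecidableEq ι] {T : M →ₗ[R] ι → R}
    (hT : Function.Surjective T) :
    LinearIndependent R fun i => (LinearMap.proj i : (ι → R) →ₗ[R] R) ∘ₗ T := by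
  rw [linearIndependent_iff']
  intro s c hc i hi
  obtain ⟨x, hx⟩ := hT (Pi.single i 1)
  simpa [hx, Pi.single_apply, hi] using LinearMap.congr_fun hc x

theorem LinearMap.coprod_surjective_of_codisjoint {R M₁ M₂ M : Type*} [Semiring R]
    [AddCommMonoid M₁] [AddCommMonoid M₂] [AddCommMonoid M] [Module R M₁] [Module R M₂]
    [Module R M] {f : M₁ →ₗ[R] M} {g : M₂ →ₗ[R] M} (h : Codisjoint (range f) (range g)) :
    Function.Surjective (f.coprod g) := by
  rw [← range_eq_top, range_coprod, h.eq_top]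

/-- every `n × n` complex matrix of rank `r` admits a realization on a
complex vector space of dimension `2n - r`. -/
theorem stmt_7 {n r : ℕ} (A : Matrix (Fin n) (Fin n) ℂ) (hr : A.rank = r) :
    ∃ (αv : Fin n → (Fin (2 * n - r) → ℂ))
      (α : Fin n → ((Fin (2 * n - r) → ℂ) →ₗ[ℂ] ℂ)),
      LinearIndependent ℂ αv ∧ LinearIndependent ℂ α ∧
        ∀ i j, α i (αv j) = A j i := by
  obtain ⟨W, hW⟩ := (range Aᵀ.mulVecLin).exists_isCompl
  have hrW : r + finrank ℂ W = n := by
    have := Submodule.finrank_add_eq_of_isCompl hW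
    rwa [finrank_fin_fun, ← Matrix.rank, rank_transpose, hr] at this
  have hdim : finrank ℂ ((Fin n → ℂ) × W) = finrank ℂ (Fin (2 * n - r) → ℂ) := by
    rw [finrank_prod, finrank_fin_fun, finrank_fin_fun]
    omega
  obtain ⟨E⟩ := FiniteDimensional.nonempty_linearEquiv_of_finrank_eq hdim
  set T := Aᵀ.mulVecLin.coprod W.subtype ∘ₗ E.symm.toLinearMap
  have hT : Function.Surjective T :=
    (coprod_surjective_of_codisjoint (by simpa using hW.codisjoint)).comp E.symm.surjective
  refine ⟨fun j => E (Pi.single j 1, 0), fun i => proj i ∘ₗ T, ?_, ?_, fun i j => ?_⟩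
  · exact ((Pi.linearIndependent_single_one (Fin n) ℂ).map' (inl ℂ _ W) Submodule.ker_inl).map'
      E.toLinearMap E.ker
  · exact linearIndependent_proj_comp_of_surjective (ι := Fin n) hT
  · simp [T]
end
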